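/- Let 1 < p < 2 and q = p/(p-1). There exists a constant c > 0 such that for every n ∈ ℕ and every finite family f_1, …, f_n ∈ Exp L^q of measurable functions on [0,1], one has sup_{t>0} t · (#{k : ‖f_k‖_{L^1[0,1]} > t})^{1/p} ≤ c · max_{ε ∈ {-1,1}^n} ‖Σ_{k=1}^n ε_k f_k‖_{Exp L^q}. (That is, the inclusion Exp L^q ⊂ L^1 is (ℓ^{p,∞},1)-absolutely summing.) -/

import Mathlib

open MeasureTheory
open scoped ENNReal

/-- Lebesgue measure restricted to `[0,1]`. -/
noncomputable def mu01 : Measure ℝ := volume.restrict (Set.Icc 0 1)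

/-- The weight `W_p(t) = (log(e/t))^{1-p}` for `t ∈ (0,1]`, `W_p(0)=0`. -/
noncomputable def Wp (p t : ℝ) : ℝ :=
  if t = 0 then 0 else Real.log (Real.exp 1 / t) ^ (1 - p)

/-- The norm of the Lorentz space `X_p` on `[0,1]`:
`‖f‖_{X_p} = (∫_0^∞ W_p(μ{s ∈ [0,1] : |f s|^p > λ}) dλ)^{1/p}`. -/
noncomputable def XpNorm (p : ℝ) (f : ℝ → ℝ) : ℝ≥0∞ :=
  (∫⁻ lam in Set.Ioi (0 : ℝ),
      ENNReal.ofReal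
        (Wp p (volume {s : ℝ | s ∈ Set.Icc (0 : ℝ) 1 ∧ lam < |f s| ^ p}).toReal)) ^ (1 / p)

/-- Luxemburg norm of the exponential Orlicz space `Exp L^α` on `[0,1]`. -/
noncomputable def expLNorm (α : ℝ) (f : ℝ → ℝ) : ℝ≥0∞ :=
  ⨅ (lam : ℝ) (_ : 0 < lam ∧
      ∫⁻ t, ENNReal.ofReal (Real.exp ((|f t| / lam) ^ α) - 1) ∂mu01 ≤ 1),
    ENNReal.ofReal lam

/-- Weak `ℓ^q` quasinorm of a finite family of reals. -/
noncomputable def weakLq (q : ℝ) {n : ℕ} (a : Fin n → ℝ) : ℝ :=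
  ⨆ t : Set.Ioi (0 : ℝ), t.1 * (Nat.card {k : Fin n // t.1 < |a k|} : ℝ) ^ (1 / q)

/-- Weak `ℓ^q` quasinorm of a sequence with values in `[0,∞]`, cardinalities
taken via the counting measure on `ℕ`. -/
noncomputable def weakLqSeq (q : ℝ) (a : ℕ → ℝ≥0∞) : ℝ≥0∞ :=
  ⨆ t : Set.Ioi (0 : ℝ),
    ENNReal.ofReal t.1 * Measure.count {k : ℕ | ENNReal.ofReal t.1 < a k} ^ (1 / q)

/-- Peetre `K`-functional for the couple `(L^1[0,1], L^∞[0,1])`. -/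
noncomputable def Kfun (τ : ℝ) (f : ℝ → ℝ) : ℝ≥0∞ :=
  ⨅ (g : ℝ → ℝ) (h : ℝ → ℝ) (_ : f = g + h),
    eLpNorm g 1 mu01 + ENNReal.ofReal τ * eLpNorm h ⊤ mu01

/-- The Rademacher functions `r_k(t) = sgn(sin(2^k π t))`. -/
noncomputable def rademacher (k : ℕ) (t : ℝ) : ℝ :=
  Real.sign (Real.sin (2 ^ k * Real.pi * t))

/-- Marcinkiewicz space norm `‖f‖_{M_φ} = sup_{0<t≤1} (φ(t)/t) K(t,f;L^1,L^∞)`. -/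
noncomputable def MNorm (φ : ℝ → ℝ) (f : ℝ → ℝ) : ℝ≥0∞ :=
  ⨆ t : {t : ℝ // 0 < t ∧ t ≤ 1}, ENNReal.ofReal (φ t.1 / t.1) * Kfun t.1 f

/-!
Let `λ` exceed every `‖∑ ε_k f_k‖_{Exp L^q}` and let `A` be the set of the `m` indices with
`‖f_k‖₁ > t`. Pointwise, `2 ∑_{k ∈ A} |f_k|` is the sum of two signed sums `∑ ε_k f_k` whose signs
equal `sign f_k` on `A` and are constant off `A`, so it is dominated by one of `2^{m+1}` such sums.
The Young-type inequality `u ≤ β + e^{-β^q} (e^{u^q} - 1)` for `β ≥ 1`, applied to `u / λ` and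
integrated, gives `m t ≤ λ β + λ e^{-β^q} 2^{m+1}`. Choosing `β^q = m + 1` yields
`m t ≤ λ ((m + 1)^{1/q} + 1) ≤ 3 λ m^{1/q}`, that is `t m^{1/p} ≤ 3 λ`.
-/

instance : IsProbabilityMeasure mu01 :=
  ⟨by simp [mu01, Real.volume_Icc]⟩

noncomputable def expYoung (q lam y : ℝ) : ℝ≥0∞ :=
  ENNReal.ofReal (Real.exp ((|y| / lam) ^ q) - 1)

noncomputable def expModular (q lam : ℝ) (g : ℝ → ℝ) : ℝ≥0∞ :=
  ∫⁻ t, expYoung q lam (g t) ∂mu01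

lemma expYoung_le_expYoung {q lam y z : ℝ} (hq : 0 ≤ q) (hlam : 0 ≤ lam) (h : |y| ≤ |z|) :
    expYoung q lam y ≤ expYoung q lam z := by
  unfold expYoung
  gcongr

lemma expYoung_anti {q lam lam' : ℝ} (hq : 0 ≤ q) (hlam : 0 < lam) (h : lam ≤ lam') (y : ℝ) :
    expYoung q lam' y ≤ expYoung q lam y := by
  unfold expYoung
  gcongr
  exact div_nonneg (abs_nonneg y) (hlam.trans_le h).le

lemma expModular_le_one_of_expLNorm_lt {q lam : ℝ} {g : ℝ → ℝ} (hq : 0 ≤ q)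
    (h : expLNorm q g < ENNReal.ofReal lam) : expModular q lam g ≤ 1 := by
  obtain ⟨lam', h'⟩ := iInf_lt_iff.mp h
  obtain ⟨⟨hlam', hmod⟩, hlt⟩ := iInf_lt_iff.mp h'
  have hle : lam' ≤ lam := (ENNReal.ofReal_lt_ofReal_iff'.mp hlt).1.le
  exact (lintegral_mono fun t => expYoung_anti hq hlam' hle (g t)).trans hmod

lemma Measurable.expYoung {q lam : ℝ} {g : ℝ → ℝ} (hg : Measurable g) :
    Measurable fun t => expYoung q lam (g t) := by
  unfold _root_.expYoung; fun_prop

lemma le_add_exp_neg_rpow_mul_exp_rpow_sub_one {q β x : ℝ} (hq : 1 ≤ q) (hβ : 1 ≤ β)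
    (hx : 0 ≤ x) : x ≤ β + Real.exp (-β ^ q) * (Real.exp (x ^ q) - 1) := by
  have hexp : 0 ≤ Real.exp (x ^ q) - 1 := by
    have := Real.one_le_exp (Real.rpow_nonneg hx q); linarith
  rcases le_or_gt x β with hxβ | hβx
  · nlinarith [Real.exp_pos (-β ^ q)]
  have hβ0 : 0 < β := by linarith
  have hpow : x - β ≤ x ^ q - β ^ q := by
    have h1 : 1 ≤ β ^ (q - 1) := Real.one_le_rpow hβ (by linarith)
    have h2 : β ^ (q - 1) ≤ x ^ (q - 1) := Real.rpow_le_rpow hβ0.le hβx.le (by linarith)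
    have ex : x ^ q = x ^ (q - 1) * x := by
      rw [← Real.rpow_add_one (by linarith) (q - 1), sub_add_cancel]
    have eβ : β ^ q = β ^ (q - 1) * β := by
      rw [← Real.rpow_add_one hβ0.ne' (q - 1), sub_add_cancel]
    rw [ex, eβ]
    nlinarith
  have hsmall : Real.exp (-β ^ q) ≤ 1 := Real.exp_le_one_iff.mpr (by
    have := Real.rpow_nonneg hβ0.le q; linarith)
  calc x ≤ β + (Real.exp (x ^ q - β ^ q) - 1) := by
        linarith [Real.add_one_le_exp (x ^ q - β ^ q)]
    _ = β + (Real.exp (-β ^ q) * Real.exp (x ^ q) - 1) := by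
        rw [← Real.exp_add, neg_add_eq_sub]
    _ ≤ β + Real.exp (-β ^ q) * (Real.exp (x ^ q) - 1) := by
        linarith

lemma ofReal_abs_le_add_mul_expYoung {q lam β : ℝ} (hq : 1 ≤ q) (hβ : 1 ≤ β) (hlam : 0 < lam)
    (y : ℝ) :
    ENNReal.ofReal |y| ≤ ENNReal.ofReal (lam * β) +
      ENNReal.ofReal (lam * Real.exp (-β ^ q)) * expYoung q lam y := by
  have h := le_add_exp_neg_rpow_mul_exp_rpow_sub_one hq hβ (div_nonneg (abs_nonneg y) hlam.le)
  have hy : |y| ≤ lam * β + lam * Real.exp (-β ^ q) * (Real.exp ((|y| / lam) ^ q) - 1) := by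
    have := mul_le_mul_of_nonneg_left h hlam.le
    rwa [mul_div_cancel₀ _ hlam.ne', mul_add, ← mul_assoc] at this
  calc ENNReal.ofReal |y|
      ≤ ENNReal.ofReal (lam * β + lam * Real.exp (-β ^ q) * (Real.exp ((|y| / lam) ^ q) - 1)) :=
        ENNReal.ofReal_le_ofReal hy
    _ ≤ _ := by
        refine ENNReal.ofReal_add_le.trans_eq ?_
        rw [expYoung, ← ENNReal.ofReal_mul (by positivity)]

section

variable {ι : Type*} [DecidableEq ι]

def signPattern (B : Finset ι) (k : ι) : ({-1, 1} : Set ℝ) :=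
  if k ∈ B then ⟨1, by simp⟩ else ⟨-1, by simp⟩

lemma coe_signPattern (B : Finset ι) (k : ι) :
    (signPattern B k : ℝ) = if k ∈ B then 1 else -1 := by
  unfold signPattern; split_ifs <;> rfl

variable [Fintype ι]

def signedSum (B : Finset ι) (a : ι → ℝ) : ℝ :=
  ∑ k, (signPattern B k : ℝ) * a k

lemma two_mul_sum_abs_eq_signedSum_add (a : ι → ℝ) (A : Finset ι) :
    2 * ∑ k ∈ A, |a k| =
      signedSum {k ∈ A | 0 ≤ a k} a + signedSum ({k ∈ A | 0 ≤ a k} ∪ Aᶜ) a := by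
  calc 2 * ∑ k ∈ A, |a k| = ∑ k, if k ∈ A then 2 * |a k| else 0 := by
        rw [Finset.sum_ite_mem, Finset.univ_inter, Finset.mul_sum]
    _ = _ := by
        rw [signedSum, signedSum, ← Finset.sum_add_distrib]
        refine Finset.sum_congr rfl fun k _ => ?_
        simp only [coe_signPattern, Finset.mem_union, Finset.mem_filter, Finset.mem_compl]
        by_cases hA : k ∈ A
        · by_cases h : 0 ≤ a k
          · simp only [hA, h, abs_of_nonneg, and_self, true_or, if_true]; ring
          · simp only [hA, h, abs_of_neg (not_le.mp h), and_false, not_true, or_false, if_true,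
              if_false]; ring
        · simp only [hA, false_and, not_false_eq_true, or_true, if_true, if_false]; ring

lemma exists_sum_abs_le_max_signedSum (a : ι → ℝ) (A : Finset ι) :
    ∃ B ⊆ A, ∑ k ∈ A, |a k| ≤ max |signedSum B a| |signedSum (B ∪ Aᶜ) a| := by
  set B := {k ∈ A | 0 ≤ a k}
  refine ⟨B, Finset.filter_subset _ _, ?_⟩
  have := two_mul_sum_abs_eq_signedSum_add a A
  linarith [le_abs_self (signedSum B a), le_abs_self (signedSum (B ∪ Aᶜ) a),
    le_max_left |signedSum B a| |signedSum (B ∪ Aᶜ) a|,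
    le_max_right |signedSum B a| |signedSum (B ∪ Aᶜ) a|]

lemma ofReal_sum_abs_le {q lam β : ℝ} (hq : 1 ≤ q) (hβ : 1 ≤ β) (hlam : 0 < lam)
    (a : ι → ℝ) (A : Finset ι) :
    ENNReal.ofReal (∑ k ∈ A, |a k|) ≤ ENNReal.ofReal (lam * β) +
      ENNReal.ofReal (lam * Real.exp (-β ^ q)) * ∑ B ∈ A.powerset,
        (expYoung q lam (signedSum B a) + expYoung q lam (signedSum (B ∪ Aᶜ) a)) := by
  obtain ⟨B₀, hB₀, hmax⟩ := exists_sum_abs_le_max_signedSum a A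
  set u := ∑ k ∈ A, |a k|
  have hu : |u| = u := abs_of_nonneg (Finset.sum_nonneg fun k _ => abs_nonneg (a k))
  have hq0 : 0 ≤ q := by linarith
  have hyoung : expYoung q lam u ≤
      expYoung q lam (signedSum B₀ a) + expYoung q lam (signedSum (B₀ ∪ Aᶜ) a) := by
    rcases le_max_iff.mp hmax with h | h
    · exact (expYoung_le_expYoung hq0 hlam.le (hu.trans_le h)).trans le_self_add
    · exact (expYoung_le_expYoung hq0 hlam.le (hu.trans_le h)).trans le_add_self
  calc ENNReal.ofReal u = ENNReal.ofReal |u| := by rw [hu]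
    _ ≤ _ := ofReal_abs_le_add_mul_expYoung hq hβ hlam u
    _ ≤ _ := by
      gcongr
      refine hyoung.trans (Finset.single_le_sum (f := fun B =>
        expYoung q lam (signedSum B a) + expYoung q lam (signedSum (B ∪ Aᶜ) a))
        (fun _ _ => zero_le) (Finset.mem_powerset.mpr hB₀))

lemma sum_eLpNorm_one_le {q lam β : ℝ} (hq : 1 ≤ q) (hβ : 1 ≤ β) (hlam : 0 < lam)
    {f : ι → ℝ → ℝ} (hf : ∀ k, Measurable (f k))
    (hmod : ∀ B : Finset ι, expModular q lam (fun x => signedSum B (f · x)) ≤ 1)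
    (A : Finset ι) :
    ∑ k ∈ A, eLpNorm (f k) 1 mu01 ≤
      ENNReal.ofReal (lam * β) + ENNReal.ofReal (lam * Real.exp (-β ^ q)) * 2 ^ (A.card + 1) := by
  have hmeas (B : Finset ι) : Measurable fun x => expYoung q lam (signedSum B (f · x)) :=
    Measurable.expYoung (by unfold signedSum; fun_prop)
  calc ∑ k ∈ A, eLpNorm (f k) 1 mu01 = ∫⁻ x, ENNReal.ofReal (∑ k ∈ A, |f k x|) ∂mu01 := by
        simp_rw [eLpNorm_one_eq_lintegral_enorm, Real.enorm_eq_ofReal_abs]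
        rw [← lintegral_finsetSum _ fun k _ => by fun_prop]
        exact lintegral_congr fun x =>
          (ENNReal.ofReal_sum_of_nonneg fun k _ => abs_nonneg _).symm
    _ ≤ ∫⁻ x, (ENNReal.ofReal (lam * β) + ENNReal.ofReal (lam * Real.exp (-β ^ q)) *
          ∑ B ∈ A.powerset, (expYoung q lam (signedSum B (f · x)) +
            expYoung q lam (signedSum (B ∪ Aᶜ) (f · x)))) ∂mu01 :=
        lintegral_mono fun x => ofReal_sum_abs_le hq hβ hlam (f · x) A
    _ = ENNReal.ofReal (lam * β) + ENNReal.ofReal (lam * Real.exp (-β ^ q)) *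
          ∑ B ∈ A.powerset, (expModular q lam (fun x => signedSum B (f · x)) +
            expModular q lam (fun x => signedSum (B ∪ Aᶜ) (f · x))) := by
        rw [lintegral_add_left measurable_const, lintegral_const, measure_univ, mul_one,
          lintegral_const_mul' _ _ ENNReal.ofReal_ne_top,
          lintegral_finsetSum _ fun B _ => by have := hmeas B; have := hmeas (B ∪ Aᶜ); fun_prop]
        simp only [lintegral_add_left (hmeas _)]
        rfl
    _ ≤ ENNReal.ofReal (lam * β) + ENNReal.ofReal (lam * Real.exp (-β ^ q)) *
          ∑ _B ∈ A.powerset, (1 + 1) := by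
        gcongr <;> apply hmod
    _ = _ := by
        rw [Finset.sum_const, Finset.card_powerset, nsmul_eq_mul, one_add_one_eq_two, pow_succ]
        push_cast
        ring

lemma mul_card_le {q lam t : ℝ} (hq : 1 ≤ q) (hlam : 0 < lam) (ht : 0 ≤ t)
    {f : ι → ℝ → ℝ} (hf : ∀ k, Measurable (f k))
    (hmod : ∀ B : Finset ι, expModular q lam (fun x => signedSum B (f · x)) ≤ 1)
    {A : Finset ι} (hA : ∀ k ∈ A, ENNReal.ofReal t ≤ eLpNorm (f k) 1 mu01) :
    t * A.card ≤ lam * (((A.card : ℝ) + 1) ^ (1 / q) + 1) := by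
  set m := A.card
  set β := ((m : ℝ) + 1) ^ (1 / q)
  have hβ : 1 ≤ β := Real.one_le_rpow (by linarith [m.cast_nonneg (α := ℝ)]) (by positivity)
  have hβq : β ^ q = m + 1 := by
    rw [← Real.rpow_mul (by positivity), one_div_mul_cancel (by positivity), Real.rpow_one]
  have hexp : Real.exp (-β ^ q) * 2 ^ (m + 1) ≤ 1 := by
    have h2e : (2 : ℝ) ≤ Real.exp 1 := by linarith [Real.add_one_le_exp 1]
    calc Real.exp (-β ^ q) * 2 ^ (m + 1) ≤ Real.exp (-β ^ q) * Real.exp 1 ^ (m + 1) := by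
          gcongr
      _ = 1 := by
          rw [← Real.exp_nat_mul, ← Real.exp_add, hβq]
          push_cast
          simp
  have hlower : ENNReal.ofReal (t * m) ≤ ∑ k ∈ A, eLpNorm (f k) 1 mu01 := by
    calc ENNReal.ofReal (t * m) = ∑ _k ∈ A, ENNReal.ofReal t := by
          rw [Finset.sum_const, nsmul_eq_mul, ENNReal.ofReal_mul ht, ENNReal.ofReal_natCast,
            mul_comm]
      _ ≤ _ := Finset.sum_le_sum hA
  have hupper : ENNReal.ofReal (lam * β) + ENNReal.ofReal (lam * Real.exp (-β ^ q)) * 2 ^ (m + 1)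
      ≤ ENNReal.ofReal (lam * (β + 1)) := by
    rw [← ENNReal.ofReal_ofNat 2, ← ENNReal.ofReal_pow zero_le_two,
      ← ENNReal.ofReal_mul (by positivity), ← ENNReal.ofReal_add (by positivity) (by positivity)]
    apply ENNReal.ofReal_le_ofReal
    nlinarith
  exact (ENNReal.ofReal_le_ofReal_iff (by positivity)).mp
    (hlower.trans ((sum_eLpNorm_one_le hq hβ hlam hf hmod A).trans hupper))

lemma mul_card_rpow_le {p q lam t : ℝ} (hpq : p.HolderConjugate q) (hlam : 0 < lam) (ht : 0 ≤ t)
    {f : ι → ℝ → ℝ} (hf : ∀ k, Measurable (f k))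
    (hmod : ∀ B : Finset ι, expModular q lam (fun x => signedSum B (f · x)) ≤ 1)
    {A : Finset ι} (hA : ∀ k ∈ A, ENNReal.ofReal t ≤ eLpNorm (f k) 1 mu01) :
    t * (A.card : ℝ) ^ (1 / p) ≤ 3 * lam := by
  have hq := hpq.symm.lt.le
  rcases Nat.eq_zero_or_pos A.card with hm | hm
  · rw [hm, Nat.cast_zero, Real.zero_rpow hpq.one_div_ne_zero]
    linarith
  set m := A.card
  have hm1 : (1 : ℝ) ≤ m := by exact_mod_cast hm
  have hmq : 1 ≤ (m : ℝ) ^ (1 / q) := Real.one_le_rpow hm1 hpq.symm.one_div_nonneg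
  have hsplit : (m : ℝ) ^ (1 / p) * (m : ℝ) ^ (1 / q) = m := by
    rw [← Real.rpow_add (by linarith), hpq.one_div_add_one_div, div_one, Real.rpow_one]
  have hsucc : ((m : ℝ) + 1) ^ (1 / q) ≤ 2 * (m : ℝ) ^ (1 / q) :=
    calc ((m : ℝ) + 1) ^ (1 / q) ≤ (2 * m) ^ (1 / q) := by
          gcongr
          linarith
      _ = 2 ^ (1 / q) * (m : ℝ) ^ (1 / q) := Real.mul_rpow zero_le_two (by linarith)
      _ ≤ 2 * (m : ℝ) ^ (1 / q) := by
          gcongr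
          exact Real.rpow_le_self_of_one_le one_le_two
            ((div_le_one (by linarith)).mpr hq)
  refine le_of_mul_le_mul_right ?_ (by linarith : 0 < (m : ℝ) ^ (1 / q))
  calc t * (m : ℝ) ^ (1 / p) * (m : ℝ) ^ (1 / q) = t * m := by rw [mul_assoc, hsplit]
    _ ≤ lam * (((m : ℝ) + 1) ^ (1 / q) + 1) := mul_card_le hq hlam ht hf hmod hA
    _ ≤ lam * (2 * (m : ℝ) ^ (1 / q) + (m : ℝ) ^ (1 / q)) := by gcongr
    _ = 3 * lam * (m : ℝ) ^ (1 / q) := by ring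

end

lemma weakLq_toReal_eLpNorm_le {n : ℕ} {p q lam : ℝ} (hpq : p.HolderConjugate q) (hlam : 0 < lam)
    {f : Fin n → ℝ → ℝ} (hf : ∀ k, Measurable (f k))
    (hnorm : ⨆ ε : Fin n → ({-1, 1} : Set ℝ),
      expLNorm q (fun t => ∑ k, (ε k : ℝ) * f k t) < ENNReal.ofReal lam) :
    weakLq p (fun k => (eLpNorm (f k) 1 mu01).toReal) ≤ 3 * lam := by
  have hmod (B : Finset (Fin n)) : expModular q lam (fun x => signedSum B (f · x)) ≤ 1 :=
    expModular_le_one_of_expLNorm_lt hpq.symm.nonneg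
      ((le_iSup (fun ε : Fin n → ({-1, 1} : Set ℝ) =>
        expLNorm q (fun t => ∑ k, (ε k : ℝ) * f k t)) (signPattern B)).trans_lt hnorm)
  refine Real.iSup_le (fun ⟨t, ht⟩ => ?_) (by positivity)
  have hcard : Nat.card {k // t < |(eLpNorm (f k) 1 mu01).toReal|} =
      ({k | t < |(eLpNorm (f k) 1 mu01).toReal|} : Finset (Fin n)).card := by
    rw [Nat.card_eq_fintype_card, Fintype.card_subtype]
  rw [hcard]
  refine mul_card_rpow_le hpq hlam (le_of_lt ht) hf hmod fun k hk => ?_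
  rw [Finset.mem_filter, abs_of_nonneg ENNReal.toReal_nonneg] at hk
  exact (ENNReal.ofReal_le_ofReal hk.2.le).trans ENNReal.ofReal_toReal_le

theorem expL_subset_L1_weak_lp_summing_general (p : ℝ) (hp : 1 < p) :
    ∃ c : ℝ, 0 < c ∧ ∀ (n : ℕ) (f : Fin n → ℝ → ℝ),
      (∀ k, Measurable (f k)) → (∀ k, expLNorm (p / (p - 1)) (f k) ≠ ⊤) →
      ENNReal.ofReal (weakLq p fun k => (eLpNorm (f k) 1 mu01).toReal) ≤
        ENNReal.ofReal c *
          ⨆ ε : Fin n → ({-1, 1} : Set ℝ),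
            expLNorm (p / (p - 1)) (fun t => ∑ k, (ε k : ℝ) * f k t) := by
  have hpq : p.HolderConjugate (p / (p - 1)) := .conjExponent hp
  refine ⟨3, by norm_num, fun n f hf _ => ?_⟩
  set W := weakLq p fun k => (eLpNorm (f k) 1 mu01).toReal
  set S := ⨆ ε : Fin n → ({-1, 1} : Set ℝ),
    expLNorm (p / (p - 1)) (fun t => ∑ k, (ε k : ℝ) * f k t)
  have hW : ENNReal.ofReal (W / 3) ≤ S := by
    refine le_of_forall_gt_imp_ge_of_dense fun c hc => ?_
    rcases eq_or_ne c ⊤ with rfl | hc_top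
    · exact le_top
    have hlam : 0 < c.toReal := ENNReal.toReal_pos (zero_le.trans_lt hc).ne' hc_top
    rw [← ENNReal.ofReal_toReal hc_top] at hc ⊢
    exact ENNReal.ofReal_le_ofReal (by linarith [weakLq_toReal_eLpNorm_le hpq hlam hf hc])
  calc ENNReal.ofReal W = ENNReal.ofReal 3 * ENNReal.ofReal (W / 3) := by
        rw [← ENNReal.ofReal_mul zero_le_three, mul_div_cancel₀ W three_ne_zero]
    _ ≤ ENNReal.ofReal 3 * S := by gcongr

/-- Corollary: for `1 < p < 2` and `q = p/(p-1)`, the inclusion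
`Exp L^q ⊂ L^1` is `(ℓ^{p,∞},1)`-absolutely summing. -/
theorem expL_subset_L1_weak_lp_summing (p : ℝ) (hp : 1 < p) (hp2 : p < 2) :
    ∃ c : ℝ, 0 < c ∧ ∀ (n : ℕ) (f : Fin n → ℝ → ℝ),
      (∀ k, Measurable (f k)) → (∀ k, expLNorm (p / (p - 1)) (f k) ≠ ⊤) →
      ENNReal.ofReal (weakLq p fun k => (eLpNorm (f k) 1 mu01).toReal) ≤
        ENNReal.ofReal c *
          ⨆ ε : Fin n → ({-1, 1} : Set ℝ),
            expLNorm (p / (p - 1)) (fun t => ∑ k, (ε k : ℝ) * f k t) :=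
  expL_subset_L1_weak_lp_summing_general p hp
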